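/- arXiv:1906.04003 — 3 statements merged into one kernel-verified Lean document; each statement's English description precedes it below -/
import Mathlib

section
/- Let P ⊂ ℝ³ be a nonempty finite point cloud with z_min ≤ z ≤ z_max for all (x,y,z) ∈ P, let w : ℝ² × ℝ² → [0,∞) be a weight function, and let (x_i*, y_j*) ∈ ℝ² for 1 ≤ i ≤ n_x, 1 ≤ j ≤ n_y be points such that Σ_{(x,y,z)∈P} w(x,y,x_i*,y_j*) > 0 for every (i,j). Let B_{ij} : ℝ² → ℝ be functions and Ω ⊆ ℝ² a set such that B_{ij}(x,y) ≥ 0 for all (i,j) and all (x,y) ∈ Ω, and Σ_{i=1}^{n_x} Σ_{j=1}^{n_y} B_{ij}(x,y) = 1 for all (x,y) ∈ Ω. Then the weighted quasi interpolant spline approximation f_w satisfies z_min ≤ f_w(x,y) ≤ z_max for all (x,y) ∈ Ω. -/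
/-- Control point estimator of a point cloud `P ⊂ ℝ³` with weight function `w`. -/
noncomputable def zhat (P : Finset (ℝ × ℝ × ℝ)) (w : ℝ → ℝ → ℝ → ℝ → ℝ) (u v : ℝ) : ℝ :=
  (∑ p ∈ P, p.2.2 * w p.1 p.2.1 u v) / (∑ p ∈ P, w p.1 p.2.1 u v)

theorem stmt_1 (P : Finset (ℝ × ℝ × ℝ)) (hP : P.Nonempty)
    (zmin zmax : ℝ) (hz : ∀ p ∈ P, zmin ≤ p.2.2 ∧ p.2.2 ≤ zmax)
    (w : ℝ → ℝ → ℝ → ℝ → ℝ) (hw : ∀ x y u v, 0 ≤ w x y u v)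
    (nx ny : ℕ) (xs ys : ℕ → ℝ)
    (hden : ∀ i ∈ Finset.Icc 1 nx, ∀ j ∈ Finset.Icc 1 ny,
      0 < ∑ p ∈ P, w p.1 p.2.1 (xs i) (ys j))
    (B : ℕ → ℕ → ℝ → ℝ → ℝ) (Ω : Set (ℝ × ℝ))
    (hBnonneg : ∀ i ∈ Finset.Icc 1 nx, ∀ j ∈ Finset.Icc 1 ny,
      ∀ q ∈ Ω, 0 ≤ B i j q.1 q.2)
    (hBsum : ∀ q ∈ Ω,
      ∑ i ∈ Finset.Icc 1 nx, ∑ j ∈ Finset.Icc 1 ny, B i j q.1 q.2 = 1) :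
    ∀ q ∈ Ω,
      zmin ≤ (∑ i ∈ Finset.Icc 1 nx, ∑ j ∈ Finset.Icc 1 ny,
                zhat P w (xs i) (ys j) * B i j q.1 q.2) ∧
      (∑ i ∈ Finset.Icc 1 nx, ∑ j ∈ Finset.Icc 1 ny,
        zhat P w (xs i) (ys j) * B i j q.1 q.2) ≤ zmax := by
  intro q hq
  -- bounds on each zhat
  have hzhat : ∀ i ∈ Finset.Icc 1 nx, ∀ j ∈ Finset.Icc 1 ny,
      zmin ≤ zhat P w (xs i) (ys j) ∧ zhat P w (xs i) (ys j) ≤ zmax := by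
    intro i hi j hj
    have hd := hden i hi j hj
    constructor
    · rw [zhat, le_div_iff₀ hd]
      calc zmin * ∑ p ∈ P, w p.1 p.2.1 (xs i) (ys j)
          = ∑ p ∈ P, zmin * w p.1 p.2.1 (xs i) (ys j) := by rw [Finset.mul_sum]
        _ ≤ ∑ p ∈ P, p.2.2 * w p.1 p.2.1 (xs i) (ys j) :=
            Finset.sum_le_sum fun p hp =>
              mul_le_mul_of_nonneg_right (hz p hp).1 (hw _ _ _ _)
    · rw [zhat, div_le_iff₀ hd]
      calc (∑ p ∈ P, p.2.2 * w p.1 p.2.1 (xs i) (ys j))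
          ≤ ∑ p ∈ P, zmax * w p.1 p.2.1 (xs i) (ys j) :=
            Finset.sum_le_sum fun p hp =>
              mul_le_mul_of_nonneg_right (hz p hp).2 (hw _ _ _ _)
        _ = zmax * ∑ p ∈ P, w p.1 p.2.1 (xs i) (ys j) := by rw [Finset.mul_sum]
  constructor
  · calc zmin = ∑ i ∈ Finset.Icc 1 nx, ∑ j ∈ Finset.Icc 1 ny, zmin * B i j q.1 q.2 := by
          simp_rw [← Finset.mul_sum]; rw [hBsum q hq, mul_one]
      _ ≤ _ := Finset.sum_le_sum fun i hi => Finset.sum_le_sum fun j hj =>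
          mul_le_mul_of_nonneg_right (hzhat i hi j hj).1 (hBnonneg i hi j hj q hq)
  · calc (∑ i ∈ Finset.Icc 1 nx, ∑ j ∈ Finset.Icc 1 ny,
          zhat P w (xs i) (ys j) * B i j q.1 q.2)
        ≤ ∑ i ∈ Finset.Icc 1 nx, ∑ j ∈ Finset.Icc 1 ny, zmax * B i j q.1 q.2 :=
          Finset.sum_le_sum fun i hi => Finset.sum_le_sum fun j hj =>
            mul_le_mul_of_nonneg_right (hzhat i hi j hj).2 (hBnonneg i hi j hj q hq)
      _ = zmax := by simp_rw [← Finset.mul_sum]; rw [hBsum q hq, mul_one]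
end

section
/- Let P ⊂ ℝ³ be a nonempty finite point cloud, w : ℝ² × ℝ² → [0,∞) a weight function with Σ_{(x,y,z)∈P} w(x,y,x_i*,y_j*) > 0 for every (i,j), let x_1 ≤ … ≤ x_{n_x+p_x+1} and y_1 ≤ … ≤ y_{n_y+p_y+1} be nondecreasing knot vectors, and let B_{ij} : ℝ² → ℝ satisfy: (a) B_{ij}(x,y) = 0 whenever x ∉ [x_i, x_{i+p_x+1}) or y ∉ [y_j, y_{j+p_y+1}); (b) B_{ij}(x,y) ≥ 0 for all (i,j) and all (x,y); (c) Σ_{i=1}^{n_x} Σ_{j=1}^{n_y} B_{ij}(x,y) = 1 at the point (x,y) under consideration. Then for x ∈ [x_μ, x_{μ+1}) and y ∈ [y_ν, y_{ν+1}), where p_x+1 ≤ μ ≤ n_x and p_y+1 ≤ ν ≤ n_y, the local bounds hold: min_{i=μ−p_x,…,μ; j=ν−p_y,…,ν} ẑ_w(x_i*, y_j*) ≤ f_w(x,y) ≤ max_{i=μ−p_x,…,μ; j=ν−p_y,…,ν} ẑ_w(x_i*, y_j*). -/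
lemma chain_mono (f : ℕ → ℝ) (lo hi : ℕ)
    (h : ∀ i, lo ≤ i → i ≤ hi → f i ≤ f (i + 1)) :
    ∀ a b, lo ≤ a → a ≤ b → b ≤ hi + 1 → f a ≤ f b := by
  intro a b ha hab hb
  induction b with
  | zero =>
    have : a = 0 := by omega
    subst this; exact le_refl _
  | succ n ih =>
    rcases Nat.lt_or_ge a (n + 1) with h1 | h2
    · exact (ih (by omega) (by omega)).trans (h n (by omega) (by omega))
    · have : a = n + 1 := by omega
      subst this; exact le_refl _

theorem stmt_3 (P : Finset (ℝ × ℝ × ℝ)) (hP : P.Nonempty)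
    (w : ℝ → ℝ → ℝ → ℝ → ℝ) (hw : ∀ x y u v, 0 ≤ w x y u v)
    (nx ny px py : ℕ) (xs ys : ℕ → ℝ)
    (hden : ∀ i ∈ Finset.Icc 1 nx, ∀ j ∈ Finset.Icc 1 ny,
      0 < ∑ p ∈ P, w p.1 p.2.1 (xs i) (ys j))
    (xk yk : ℕ → ℝ)
    (hxk : ∀ i ∈ Finset.Icc 1 (nx + px), xk i ≤ xk (i + 1))
    (hyk : ∀ j ∈ Finset.Icc 1 (ny + py), yk j ≤ yk (j + 1))
    (B : ℕ → ℕ → ℝ → ℝ → ℝ)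
    (hsupp : ∀ i ∈ Finset.Icc 1 nx, ∀ j ∈ Finset.Icc 1 ny, ∀ x y : ℝ,
      (x ∉ Set.Ico (xk i) (xk (i + px + 1)) ∨ y ∉ Set.Ico (yk j) (yk (j + py + 1))) →
      B i j x y = 0)
    (μ ν : ℕ) (hμ1 : px + 1 ≤ μ) (hμ2 : μ ≤ nx) (hν1 : py + 1 ≤ ν) (hν2 : ν ≤ ny)
    (x y : ℝ) (hx : x ∈ Set.Ico (xk μ) (xk (μ + 1))) (hy : y ∈ Set.Ico (yk ν) (yk (ν + 1)))
    (hBnonneg : ∀ i j, 0 ≤ B i j x y)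
    (hBsum : ∑ i ∈ Finset.Icc 1 nx, ∑ j ∈ Finset.Icc 1 ny, B i j x y = 1)
    (hne : (Finset.Icc (μ - px) μ ×ˢ Finset.Icc (ν - py) ν).Nonempty) :
    (Finset.Icc (μ - px) μ ×ˢ Finset.Icc (ν - py) ν).inf'
        hne (fun ij => zhat P w (xs ij.1) (ys ij.2))
      ≤ ∑ i ∈ Finset.Icc 1 nx, ∑ j ∈ Finset.Icc 1 ny, zhat P w (xs i) (ys j) * B i j x y ∧
    (∑ i ∈ Finset.Icc 1 nx, ∑ j ∈ Finset.Icc 1 ny, zhat P w (xs i) (ys j) * B i j x y)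
      ≤ (Finset.Icc (μ - px) μ ×ˢ Finset.Icc (ν - py) ν).sup'
          hne (fun ij => zhat P w (xs ij.1) (ys ij.2)) := by
  set S := Finset.Icc (μ - px) μ ×ˢ Finset.Icc (ν - py) ν with hS
  have hxmono : ∀ a b, 1 ≤ a → a ≤ b → b ≤ nx + px + 1 → xk a ≤ xk b :=
    chain_mono xk 1 (nx + px) (fun i h1 h2 => hxk i (Finset.mem_Icc.mpr ⟨h1, h2⟩))
  have hymono : ∀ a b, 1 ≤ a → a ≤ b → b ≤ ny + py + 1 → yk a ≤ yk b :=
    chain_mono yk 1 (ny + py) (fun i h1 h2 => hyk i (Finset.mem_Icc.mpr ⟨h1, h2⟩))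
  have hsub : S ⊆ Finset.Icc 1 nx ×ˢ Finset.Icc 1 ny := by
    intro p hp
    simp only [hS, Finset.mem_product, Finset.mem_Icc] at hp ⊢
    omega
  -- Off the local box S, the basis function vanishes at (x, y)
  have hzero : ∀ p ∈ Finset.Icc 1 nx ×ˢ Finset.Icc 1 ny, p ∉ S → B p.1 p.2 x y = 0 := by
    rintro ⟨i, j⟩ hp hpn
    simp only [Finset.mem_product, Finset.mem_Icc] at hp
    simp only [hS, Finset.mem_product, Finset.mem_Icc, not_and_or, not_and, not_le] at hpn
    have hi := hp.1
    have hj := hp.2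
    rcases hpn with hcase | hcase
    · -- i outside [μ - px, μ]
      apply hsupp i (Finset.mem_Icc.mpr hi) j (Finset.mem_Icc.mpr hj) x y
      left
      rcases Nat.lt_or_ge i (μ - px) with h1 | h2
      · -- i + px + 1 ≤ μ, so xk (i+px+1) ≤ xk μ ≤ x
        intro hmem
        have h3 : xk (i + px + 1) ≤ xk μ :=
          hxmono _ _ (by omega) (by omega) (by omega)
        exact absurd hmem.2 (not_lt.mpr (h3.trans hx.1))
      · -- μ < i, so x < xk (μ+1) ≤ xk i
        have h1 : μ < i := by omega
        intro hmem
        have h3 : xk (μ + 1) ≤ xk i := hxmono _ _ (by omega) (by omega) (by omega)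
        exact absurd hmem.1 (not_le.mpr (lt_of_lt_of_le hx.2 h3))
    · -- j outside [ν - py, ν]
      apply hsupp i (Finset.mem_Icc.mpr hi) j (Finset.mem_Icc.mpr hj) x y
      right
      rcases Nat.lt_or_ge j (ν - py) with h1 | h2
      · intro hmem
        have h3 : yk (j + py + 1) ≤ yk ν :=
          hymono _ _ (by omega) (by omega) (by omega)
        exact absurd hmem.2 (not_lt.mpr (h3.trans hy.1))
      · have h1 : ν < j := by omega
        intro hmem
        have h3 : yk (ν + 1) ≤ yk j := hymono _ _ (by omega) (by omega) (by omega)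
        exact absurd hmem.1 (not_le.mpr (lt_of_lt_of_le hy.2 h3))
  -- Rewrite double sums as sums over the product set, restricted to S
  have hsumz :
      (∑ i ∈ Finset.Icc 1 nx, ∑ j ∈ Finset.Icc 1 ny, zhat P w (xs i) (ys j) * B i j x y)
        = ∑ p ∈ S, zhat P w (xs p.1) (ys p.2) * B p.1 p.2 x y := by
    rw [← Finset.sum_product']
    exact (Finset.sum_subset hsub (fun p hp hpn => by rw [hzero p hp hpn, mul_zero])).symm
  have hsumB : (∑ p ∈ S, B p.1 p.2 x y) = 1 := by
    rw [← hBsum, ← Finset.sum_product']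
    exact Finset.sum_subset hsub (fun p hp hpn => hzero p hp hpn)
  rw [hsumz]
  constructor
  · calc S.inf' hne (fun ij => zhat P w (xs ij.1) (ys ij.2))
        = ∑ p ∈ S, S.inf' hne (fun ij => zhat P w (xs ij.1) (ys ij.2)) * B p.1 p.2 x y := by
          rw [← Finset.mul_sum, hsumB, mul_one]
      _ ≤ ∑ p ∈ S, zhat P w (xs p.1) (ys p.2) * B p.1 p.2 x y := by
          apply Finset.sum_le_sum
          intro p hp
          exact mul_le_mul_of_nonneg_right (Finset.inf'_le _ hp) (hBnonneg p.1 p.2)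
  · calc (∑ p ∈ S, zhat P w (xs p.1) (ys p.2) * B p.1 p.2 x y)
        ≤ ∑ p ∈ S, S.sup' hne (fun ij => zhat P w (xs ij.1) (ys ij.2)) * B p.1 p.2 x y := by
          apply Finset.sum_le_sum
          intro p hp
          exact mul_le_mul_of_nonneg_right (Finset.le_sup' (fun ij => zhat P w (xs ij.1) (ys ij.2)) hp) (hBnonneg p.1 p.2)
      _ = S.sup' hne (fun ij => zhat P w (xs ij.1) (ys ij.2)) := by
          rw [← Finset.mul_sum, hsumB, mul_one]
end

section
/- Suppose the knot averages (x_i*, y_j*) ∈ ℝ², for 1 ≤ i ≤ n_x and 1 ≤ j ≤ n_y, are pairwise distinct, and that the point cloud consists of exact samples of a function g : ℝ² → ℝ at the knot averages: P = {(x_i*, y_j*, g(x_i*, y_j*)) : 1 ≤ i ≤ n_x, 1 ≤ j ≤ n_y}. Let w be the 1-nearest-neighbor weight: w(x,y,u,v) = 1 if (x,y) is the unique closest point to (u,v) (in the Euclidean distance on ℝ²) among the projections {(x', y') : (x',y',z') ∈ P}, and w(x,y,u,v) = 0 otherwise. Then ẑ_w(x_i*, y_j*) = g(x_i*, y_j*)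 for every (i,j), and consequently, for any functions B_{ij} : ℝ² → ℝ, the weighted quasi interpolant spline approximation coincides with the variation diminishing spline approximation of g: f_w(x,y) = Σ_{i=1}^{n_x} Σ_{j=1}^{n_y} g(x_i*, y_j*)·B_{ij}(x,y) for all (x,y) ∈ ℝ². -/
open Classical

/-- Euclidean distance on `ℝ²`. -/
noncomputable def eucl (x y u v : ℝ) : ℝ := Real.sqrt ((x - u) ^ 2 + (y - v) ^ 2)

theorem stmt_7 (nx ny : ℕ) (hnx : 1 ≤ nx) (hny : 1 ≤ ny) (xs ys : ℕ → ℝ) (g : ℝ → ℝ → ℝ)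
    (hdistinct : ∀ i ∈ Finset.Icc 1 nx, ∀ j ∈ Finset.Icc 1 ny,
      ∀ i' ∈ Finset.Icc 1 nx, ∀ j' ∈ Finset.Icc 1 ny,
      (xs i, ys j) = (xs i', ys j') → i = i' ∧ j = j')
    (P : Finset (ℝ × ℝ × ℝ))
    (hPdef : P = (Finset.Icc 1 nx ×ˢ Finset.Icc 1 ny).image
      (fun ij => (xs ij.1, ys ij.2, g (xs ij.1) (ys ij.2))))
    (w : ℝ → ℝ → ℝ → ℝ → ℝ)
    (hw : ∀ x y u v : ℝ, w x y u v =
      if (∃ z : ℝ, (x, y, z) ∈ P) ∧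
          (∀ p ∈ P, (p.1, p.2.1) ≠ (x, y) → eucl x y u v < eucl p.1 p.2.1 u v)
      then 1 else 0) :
    (∀ i ∈ Finset.Icc 1 nx, ∀ j ∈ Finset.Icc 1 ny,
      zhat P w (xs i) (ys j) = g (xs i) (ys j)) ∧
    ∀ (B : ℕ → ℕ → ℝ → ℝ → ℝ) (x y : ℝ),
      ∑ i ∈ Finset.Icc 1 nx, ∑ j ∈ Finset.Icc 1 ny, zhat P w (xs i) (ys j) * B i j x y
        = ∑ i ∈ Finset.Icc 1 nx, ∑ j ∈ Finset.Icc 1 ny, g (xs i) (ys j) * B i j x y := by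
  have key : ∀ i ∈ Finset.Icc 1 nx, ∀ j ∈ Finset.Icc 1 ny,
      zhat P w (xs i) (ys j) = g (xs i) (ys j) := by
    intro i hi j hj
    set u := xs i with hu
    set v := ys j with hv
    have hmem : (u, v, g u v) ∈ P := by
      rw [hPdef]
      exact Finset.mem_image.2 ⟨(i, j), Finset.mem_product.2 ⟨hi, hj⟩, rfl⟩
    have heucl0 : eucl u v u v = 0 := by simp [eucl]
    have heuclpos : ∀ x y : ℝ, (x, y) ≠ (u, v) → 0 < eucl x y u v := by
      intro x y hne
      apply Real.sqrt_pos.2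
      have : x ≠ u ∨ y ≠ v := by
        by_contra h
        push_neg at h
        exact hne (by rw [h.1, h.2])
      rcases this with h | h
      · nlinarith [pow_two_pos_of_ne_zero (sub_ne_zero.2 h), sq_nonneg (y - v)]
      · nlinarith [pow_two_pos_of_ne_zero (sub_ne_zero.2 h), sq_nonneg (x - u)]
    have hw1 : w u v u v = 1 := by
      rw [hw, if_pos]
      refine ⟨⟨g u v, hmem⟩, ?_⟩
      intro p hp hne
      rw [heucl0]
      exact heuclpos p.1 p.2.1 hne
    have hw0 : ∀ p ∈ P, (p.1, p.2.1) ≠ (u, v) → w p.1 p.2.1 u v = 0 := by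
      intro p hp hne
      rw [hw, if_neg]
      rintro ⟨-, h2⟩
      have h3 := h2 (u, v, g u v) hmem (Ne.symm hne)
      have h4 : 0 ≤ eucl p.1 p.2.1 u v := Real.sqrt_nonneg _
      simp only [heucl0] at h3
      linarith
    have huniq : ∀ p ∈ P, (p.1, p.2.1) = (u, v) → p = (u, v, g u v) := by
      intro p hp hpe
      rw [hPdef] at hp
      obtain ⟨⟨i', j'⟩, hmem', rfl⟩ := Finset.mem_image.1 hp
      rw [Finset.mem_product] at hmem'
      have hxy : (xs i', ys j') = (xs i, ys j) := by simpa [hu, hv] using hpe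
      obtain ⟨h1, h2⟩ := hdistinct i' hmem'.1 j' hmem'.2 i hi j hj hxy
      subst h1; subst h2; rfl
    have hden : (∑ p ∈ P, w p.1 p.2.1 u v) = 1 := by
      rw [Finset.sum_eq_single (u, v, g u v)]
      · exact hw1
      · intro p hp hne
        exact hw0 p hp fun hc => hne (huniq p hp hc)
      · intro h; exact absurd hmem h
    have hnum : (∑ p ∈ P, p.2.2 * w p.1 p.2.1 u v) = g u v := by
      rw [Finset.sum_eq_single (u, v, g u v)]
      · simp [hw1]
      · intro p hp hne
        rw [hw0 p hp fun hc => hne (huniq p hp hc), mul_zero]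
      · intro h; exact absurd hmem h
    unfold zhat
    rw [hnum, hden, div_one]
  refine ⟨key, ?_⟩
  intro B x y
  refine Finset.sum_congr rfl fun i hi => Finset.sum_congr rfl fun j hj => ?_
  rw [key i hi j hj]
end
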